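/- arXiv:2207.07732 — 2 statements merged into one kernel-verified Lean document; each statement's English description precedes it below -/
import Mathlib

section
/- Let S ∈ {0,1}^{m×n} be a binary matrix and let C and C' be invertible real m×m matrices that are both S-consistent. Then the matrix product C C' is S-consistent. -/
open Matrix

/-- Aligned subspace of matrices: entries may be nonzero only where `S` is nonzero. -/
def alignedMat {m n : ℕ} (S : Matrix (Fin m) (Fin n) ℝ) :
    Submodule ℝ (Matrix (Fin m) (Fin n) ℝ) where
  carrier := {M | ∀ i j, S i j = 0 → M i j = 0}
  zero_mem' := by intro i j _; simp
  add_mem' := by intro a b ha hb i j h; simp [Matrix.add_apply, ha i j h, hb i j h]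
  smul_mem' := by intro c M hM i j h; simp [Matrix.smul_apply, hM i j h]

/-- Aligned subspace of vectors. -/
def alignedVec {m : ℕ} (b : Fin m → ℝ) : Submodule ℝ (Fin m → ℝ) where
  carrier := {x | ∀ i, b i = 0 → x i = 0}
  zero_mem' := by intro i _; simp
  add_mem' := by intro a c ha hc i h; simp [ha i h, hc i h]
  smul_mem' := by intro r x hx i h; simp [hx i h]

/-- All-ones matrix. -/
def allOnes (m n : ℕ) : Matrix (Fin m) (Fin n) ℝ := Matrix.of fun _ _ => 1

/-- The binary mask `[𝟙 − S(𝟙 − S)ᵀ]⁺`. -/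
def consistMask {m n : ℕ} (S : Matrix (Fin m) (Fin n) ℝ) : Matrix (Fin m) (Fin m) ℝ :=
  Matrix.of fun i j => max 0 ((allOnes m m - S * (allOnes m n - S)ᵀ) i j)

/-- `C` is `S`-consistent. -/
def SConsistent {m n : ℕ} (S : Matrix (Fin m) (Fin n) ℝ)
    (C : Matrix (Fin m) (Fin m) ℝ) : Prop :=
  ∀ i j, consistMask S i j = 0 → C i j = 0

/-- A matrix has binary (0/1) entries. -/
def IsBinary {m n : ℕ} (S : Matrix (Fin m) (Fin n) ℝ) : Prop :=
  ∀ i j, S i j = 0 ∨ S i j = 1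

/-- Permutation matrix `P` of `σ`, satisfying `P e_i = e_{σ i}`. -/
def permMat {k : ℕ} (σ : Equiv.Perm (Fin k)) : Matrix (Fin k) (Fin k) ℝ :=
  Matrix.of fun i j => if i = σ j then 1 else 0

open Classical in
/-- `‖M‖₀`, the number of nonzero entries of `M`. -/
noncomputable def zeroNorm {m n : ℕ} (M : Matrix (Fin m) (Fin n) ℝ) : ℕ :=
  (Finset.univ.filter fun p : Fin m × Fin n => M p.1 p.2 ≠ 0).card


lemma mask_zero_iff {m n : ℕ} (S : Matrix (Fin m) (Fin n) ℝ) (hS : IsBinary S)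
    (i j : Fin m) :
    consistMask S i j = 0 ↔ ∃ k, S i k = 1 ∧ S j k = 0 := by
  have hterm : ∀ k, 0 ≤ S i k * (1 - S j k) := by
    intro k
    rcases hS i k with h1 | h1 <;> rcases hS j k with h2 | h2 <;> simp [h1, h2]
  have hval : consistMask S i j =
      max 0 (1 - ∑ k, S i k * (1 - S j k)) := by
    simp [consistMask, allOnes, Matrix.sub_apply, Matrix.mul_apply, Matrix.transpose_apply]
  rw [hval]
  constructor
  · intro h0
    have hle : 1 - ∑ k, S i k * (1 - S j k) ≤ 0 := by
      by_contra hc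
      push_neg at hc
      rw [max_eq_right hc.le] at h0
      linarith
    have hsum : (1:ℝ) ≤ ∑ k, S i k * (1 - S j k) := by linarith
    by_contra hne
    push_neg at hne
    have : ∑ k, S i k * (1 - S j k) = 0 := by
      apply Finset.sum_eq_zero
      intro k _
      rcases hS i k with h1 | h1
      · simp [h1]
      · rcases hS j k with h2 | h2
        · exact absurd h2 (hne k h1)
        · simp [h2]
    linarith
  · rintro ⟨k, h1, h2⟩
    have hsum : (1:ℝ) ≤ ∑ t, S i t * (1 - S j t) := by
      have := Finset.single_le_sum (f := fun t => S i t * (1 - S j t))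
        (fun t _ => hterm t) (Finset.mem_univ k)
      simp [h1, h2] at this
      linarith
    have : 1 - ∑ t, S i t * (1 - S j t) ≤ 0 := by linarith
    exact max_eq_left this

/-- the product of two invertible `S`-consistent matrices is `S`-consistent. -/
theorem stmt_6 {m n : ℕ} (S : Matrix (Fin m) (Fin n) ℝ) (hS : IsBinary S)
    (C C' : Matrix (Fin m) (Fin m) ℝ) (hC : IsUnit C) (hC' : IsUnit C')
    (h : SConsistent S C) (h' : SConsistent S C') :
    SConsistent S (C * C') := by
  intro i j hij
  rw [mask_zero_iff S hS] at hij
  obtain ⟨k0, hik0, hjk0⟩ := hij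
  rw [Matrix.mul_apply]
  apply Finset.sum_eq_zero
  intro k _
  by_cases hCik : C i k = 0
  · simp [hCik]
  have hmik : consistMask S i k ≠ 0 := fun hz => hCik (h i k hz)
  have hmik2 := mt (mask_zero_iff S hS i k).mpr hmik
  push_neg at hmik2
  have hSk : S k k0 = 1 := by
    rcases hS k k0 with h0 | h1
    · exact absurd h0 (hmik2 k0 hik0)
    · exact h1
  have : consistMask S k j = 0 := (mask_zero_iff S hS k j).mpr ⟨k0, hSk, hjk0⟩
  simp [h' k j this]
end

section
/- Let S ∈ {0,1}^{m×n} be a binary matrix. The set of invertible real m×m matrices that are S-consistent forms a group under matrix multiplication; i.e., it is a subgroup of GL(m, ℝ): it contains the identity matrix, is closed under matrix multiplication, and is closed under matrix inversion. -/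
open Matrix

lemma consistMask_eq_zero_iff {m n : ℕ} {S : Matrix (Fin m) (Fin n) ℝ} (hS : IsBinary S)
    (i j : Fin m) : consistMask S i j = 0 ↔ ∃ k, S i k ≠ 0 ∧ S j k = 0 := by
  have hterm : ∀ k, S i k * (1 - S j k) = if S i k ≠ 0 ∧ S j k = 0 then (1:ℝ) else 0 := by
    intro k
    rcases hS i k with h | h <;> rcases hS j k with h' | h' <;> simp [h, h']
  have hmask : consistMask S i j = max 0 (1 - ∑ k, S i k * (1 - S j k)) := by
    simp [consistMask, allOnes, Matrix.mul_apply, Matrix.sub_apply]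
  rw [hmask]
  simp only [hterm]
  rw [Finset.sum_boole, max_eq_left_iff, sub_nonpos]
  rw [show ((1:ℝ) ≤ ((Finset.univ.filter fun k => S i k ≠ 0 ∧ S j k = 0).card : ℝ)) ↔
      0 < (Finset.univ.filter fun k => S i k ≠ 0 ∧ S j k = 0).card by
    constructor
    · intro h; exact_mod_cast Nat.lt_of_lt_of_le Nat.zero_lt_one (by exact_mod_cast h)
    · intro h; exact_mod_cast h]
  rw [Finset.card_pos]
  constructor
  · rintro ⟨k, hk⟩
    simp only [Finset.mem_filter, Finset.mem_univ, true_and] at hk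
    exact ⟨k, hk⟩
  · rintro ⟨k, hk⟩
    exact ⟨k, by simp [hk.1, hk.2]⟩

lemma sconsistent_one {m n : ℕ} {S : Matrix (Fin m) (Fin n) ℝ} (hS : IsBinary S) :
    SConsistent S (1 : Matrix (Fin m) (Fin m) ℝ) := by
  intro i j h
  rcases eq_or_ne i j with rfl | hne
  · rw [consistMask_eq_zero_iff hS] at h
    obtain ⟨k, h1, h2⟩ := h
    exact absurd h2 h1
  · exact Matrix.one_apply_ne hne

lemma sconsistent_mul {m n : ℕ} {S : Matrix (Fin m) (Fin n) ℝ} (hS : IsBinary S)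
    {C C' : Matrix (Fin m) (Fin m) ℝ} (hC : SConsistent S C) (hC' : SConsistent S C') :
    SConsistent S (C * C') := by
  intro i j h
  rw [Matrix.mul_apply]
  apply Finset.sum_eq_zero
  intro k _
  rw [consistMask_eq_zero_iff hS] at h
  obtain ⟨l, h1, h2⟩ := h
  by_cases hik : consistMask S i k = 0
  · rw [hC i k hik, zero_mul]
  · by_cases hkj : consistMask S k j = 0
    · rw [hC' k j hkj, mul_zero]
    · exfalso
      rw [consistMask_eq_zero_iff hS] at hik hkj
      push_neg at hik hkj
      exact hkj l (fun h0 => (hik l (fun h0' => h1 h0')) h0 |>.elim) h2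

lemma sconsistent_inv {m n : ℕ} {S : Matrix (Fin m) (Fin n) ℝ} (hS : IsBinary S)
    {C : Matrix (Fin m) (Fin m) ℝ} (hu : IsUnit C) (hC : SConsistent S C) :
    SConsistent S C⁻¹ := by
  set T : Submodule ℝ (Matrix (Fin m) (Fin m) ℝ) := alignedMat (consistMask S) with hT
  have hmemT : ∀ X : Matrix (Fin m) (Fin m) ℝ, X ∈ T ↔ SConsistent S X := fun X => Iff.rfl
  have hCT : C ∈ T := (hmemT C).mpr hC
  let f : T →ₗ[ℝ] T :=
    { toFun := fun x => ⟨C * x.1, (hmemT _).mpr (sconsistent_mul hS hC ((hmemT _).mp x.2))⟩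
      map_add' := by intro x y; ext i j; simp [Matrix.mul_add]
      map_smul' := by intro c x; ext i j; simp [Matrix.mul_smul] }
  have hinj : Function.Injective f := by
    intro x y hxy
    have : C * x.1 = C * y.1 := congrArg Subtype.val hxy
    have := hu.mul_left_cancel this
    exact Subtype.ext this
  have hsurj : Function.Surjective f := (LinearMap.injective_iff_surjective).mp hinj
  obtain ⟨y, hy⟩ := hsurj ⟨1, (hmemT _).mpr (sconsistent_one hS)⟩
  have hy1 : C * y.1 = 1 := congrArg Subtype.val hy
  have : C⁻¹ = y.1 := Matrix.inv_eq_right_inv hy1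
  rw [this]
  exact (hmemT _).mp y.2

/-- the invertible `S`-consistent matrices form a subgroup of `GL(m, ℝ)`:
it contains the identity and is closed under multiplication and inversion. -/
theorem stmt_8 {m n : ℕ} (S : Matrix (Fin m) (Fin n) ℝ) (hS : IsBinary S) :
    (∃ H : Subgroup (Matrix.GeneralLinearGroup (Fin m) ℝ),
      ∀ A : Matrix.GeneralLinearGroup (Fin m) ℝ,
        A ∈ H ↔ SConsistent S (A : Matrix (Fin m) (Fin m) ℝ)) ∧
    SConsistent S (1 : Matrix (Fin m) (Fin m) ℝ) ∧
    (∀ C C' : Matrix (Fin m) (Fin m) ℝ, IsUnit C → IsUnit C' →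
      SConsistent S C → SConsistent S C' → SConsistent S (C * C')) ∧
    (∀ C : Matrix (Fin m) (Fin m) ℝ, IsUnit C → SConsistent S C → SConsistent S C⁻¹) := by
  refine ⟨?_, sconsistent_one hS, fun C C' _ _ hC hC' => sconsistent_mul hS hC hC',
    fun C hu hC => sconsistent_inv hS hu hC⟩
  refine ⟨{ carrier := {A | SConsistent S (A : Matrix (Fin m) (Fin m) ℝ)}
            one_mem' := sconsistent_one hS
            mul_mem' := fun ha hb => by
              simpa using sconsistent_mul hS ha hb
            inv_mem' := by
              intro A hA
              have := sconsistent_inv hS A.isUnit hA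
              simpa [Matrix.coe_units_inv] using this }, fun A => Iff.rfl⟩
end
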